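/- Let m be a positive integer and let ⟨A|R⟩ be a generator-minimal presentation which is strongly C(2) and which presents a monoid admitting some strongly C(m) presentation. Then ⟨A|R⟩ itself is strongly C(m). -/

import Mathlib

open FreeMonoid

/-- The congruence on the free monoid generated by a presentation `R`. -/
def presCon {A : Type*} (R : Set (FreeMonoid A × FreeMonoid A)) : Con (FreeMonoid A) :=
  conGen fun u v => (u, v) ∈ R

/-- `w` is a relation word of the presentation `R`. -/
def IsRelWord {A : Type*} (R : Set (FreeMonoid A × FreeMonoid A)) (w : FreeMonoid A) : Prop :=
  ∃ p ∈ R, p.1 = w ∨ p.2 = w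

/-- `u` is a factor of `w`. -/
def IsFactor {A : Type*} (u w : FreeMonoid A) : Prop := ∃ p q, w = p * u * q

/-- `u` is a piece of the presentation `R`: it is empty, or occurs as a factor of two
distinct relation words, or in two different (possibly overlapping) positions within
one relation word. -/
def IsPiece {A : Type*} (R : Set (FreeMonoid A × FreeMonoid A)) (u : FreeMonoid A) : Prop :=
  u = 1 ∨
  (∃ w₁ w₂, IsRelWord R w₁ ∧ IsRelWord R w₂ ∧ w₁ ≠ w₂ ∧ IsFactor u w₁ ∧ IsFactor u w₂) ∨
  (∃ w, IsRelWord R w ∧ ∃ p q p' q', w = p * u * q ∧ w = p' * u * q' ∧ p ≠ p')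

/-- The small overlap condition `C(m)`: no relation word is a product of strictly fewer
than `m` pieces. -/
def SmallOverlapC {A : Type*} (R : Set (FreeMonoid A × FreeMonoid A)) (m : ℕ) : Prop :=
  ∀ w, IsRelWord R w → ∀ l : List (FreeMonoid A),
    (∀ x ∈ l, IsPiece R x) → l.prod = w → m ≤ l.length

/-- The generator `a` is redundant: its class is a product of classes of other
generators. -/
def IsRedundant {A : Type*} (R : Set (FreeMonoid A × FreeMonoid A)) (a : A) : Prop :=
  (presCon R).mk' (of a) ∈
    Submonoid.closure {x : (presCon R).Quotient | ∃ b : A, b ≠ a ∧ x = (presCon R).mk' (of b)}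

/-- A presentation is generator-minimal if no generator is redundant. -/
def GeneratorMinimal {A : Type*} (R : Set (FreeMonoid A × FreeMonoid A)) : Prop :=
  ∀ a : A, ¬ IsRedundant R a

/-- `⟨A|R⟩` is an equivalence presentation: `R` is an equivalence relation on the set
of relation words. -/
def IsEquivPres {A : Type*} (R : Set (FreeMonoid A × FreeMonoid A)) : Prop :=
  (∀ w, IsRelWord R w → (w, w) ∈ R) ∧
  (∀ u v, (u, v) ∈ R → (v, u) ∈ R) ∧
  (∀ u v w, (u, v) ∈ R → (v, w) ∈ R → (u, w) ∈ R)

/-- No repeated relation words: no word occurs as a side of two distinct relations or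
as both sides of a single relation. -/
def NoRepeatedRelWords {A : Type*} (R : Set (FreeMonoid A × FreeMonoid A)) : Prop :=
  (∀ p ∈ R, p.1 ≠ p.2) ∧
  (∀ p ∈ R, ∀ q ∈ R, p ≠ q → p.1 ≠ q.1 ∧ p.1 ≠ q.2 ∧ p.2 ≠ q.1 ∧ p.2 ≠ q.2)

/-- The strong small overlap condition: C(m) together with no repeated relation words. -/
def StronglyC {A : Type*} (R : Set (FreeMonoid A × FreeMonoid A)) (m : ℕ) : Prop :=
  SmallOverlapC R m ∧ NoRepeatedRelWords R

universe u v

/-!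
Generator-minimality and C(2) force every relation word of `R` to have length at least two, so
words of length at most one are alone in their class and every generator is irreducible in the
monoid. Transported to `⟨B|S⟩`, an irreducible element is the class of a single letter; choosing
letters that are not eliminated by a relation with a one-letter side gives an injective letter map
`σ : A → B` under which `R` and the relations of `S` with two long sides define the same
congruence. Pulling these back along `σ` yields a C(m) presentation `R'` of the same congruence on
`A*`. Finally every relation word `w` of `R` is one of `R'`: it contains a relation word of `R'`,
which in turn contains a relation word of `R`, and by C(2) the latter is `w` itself. So pieces of
`R` are pieces of `R'`, and C(m) passes to `R`.
-/

section Words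

variable {X Y : Type*}

theorem isFactor_refl (w : FreeMonoid X) : IsFactor w w := ⟨1, 1, by simp⟩

theorem IsFactor.trans {u v w : FreeMonoid X} (huv : IsFactor u v) (hvw : IsFactor v w) :
    IsFactor u w := by
  obtain ⟨p, q, rfl⟩ := huv
  obtain ⟨p', q', rfl⟩ := hvw
  exact ⟨p' * p, q * q', by simp only [mul_assoc]⟩

theorem IsFactor.mul_left {u w : FreeMonoid X} (h : IsFactor u w) (x : FreeMonoid X) :
    IsFactor u (x * w) := by
  obtain ⟨p, q, rfl⟩ := h
  exact ⟨x * p, q, by simp only [mul_assoc]⟩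

theorem IsFactor.mul_right {u w : FreeMonoid X} (h : IsFactor u w) (x : FreeMonoid X) :
    IsFactor u (w * x) := by
  obtain ⟨p, q, rfl⟩ := h
  exact ⟨p, q * x, by simp only [mul_assoc]⟩

theorem IsFactor.map {u w : FreeMonoid X} (h : IsFactor u w) (f : FreeMonoid X →* FreeMonoid Y) :
    IsFactor (f u) (f w) := by
  obtain ⟨p, q, rfl⟩ := h
  exact ⟨f p, f q, by simp only [map_mul]⟩

theorem IsFactor.length_le {u w : FreeMonoid X} (h : IsFactor u w) : u.length ≤ w.length := by
  obtain ⟨p, q, rfl⟩ := h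
  simp only [length_mul]
  omega

theorem IsFactor.eq_of_length_le {u w : FreeMonoid X} (h : IsFactor u w)
    (hlen : w.length ≤ u.length) : u = w := by
  obtain ⟨p, q, rfl⟩ := h
  simp only [length_mul] at hlen
  rw [length_eq_zero.mp (by omega : p.length = 0), length_eq_zero.mp (by omega : q.length = 0),
    one_mul, mul_one]

theorem isFactor_of_mem {a : X} {w : FreeMonoid X} (h : a ∈ w) : IsFactor (of a) w := by
  obtain ⟨s, t, hst⟩ := List.append_of_mem h
  refine ⟨ofList s, ofList t, toList.injective ?_⟩
  simp only [toList_mul, toList_of, toList_ofList, List.append_assoc, List.singleton_append]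
  exact hst

theorem FreeMonoid.map_injective {f : X → Y} (hf : Function.Injective f) :
    Function.Injective (FreeMonoid.map f) := fun u w h => by
  have h' : (toList u).map f = (toList w).map f := by
    simpa only [toList_map] using congrArg toList h
  exact toList.injective (List.map_injective_iff.mpr hf h')

end Words

section Presentation

variable {X Y : Type*} {T : Set (FreeMonoid X × FreeMonoid X)}

theorem presCon_of_mem {x y : FreeMonoid X} (h : (x, y) ∈ T) : presCon T x y :=
  ConGen.Rel.of x y h

theorem presCon_le_iff {c : Con (FreeMonoid X)} : presCon T ≤ c ↔ ∀ p ∈ T, c p.1 p.2 :=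
  Con.conGen_le.trans ⟨fun h p hp => h p.1 p.2 hp, fun h x y hxy => h (x, y) hxy⟩

theorem presCon_mono {T' : Set (FreeMonoid X × FreeMonoid X)} (h : T ⊆ T') :
    presCon T ≤ presCon T' :=
  Con.conGen_mono fun _ _ hxy => h hxy

theorem isRelWord_fst {p : FreeMonoid X × FreeMonoid X} (hp : p ∈ T) : IsRelWord T p.1 :=
  ⟨p, hp, Or.inl rfl⟩

theorem isRelWord_snd {p : FreeMonoid X × FreeMonoid X} (hp : p ∈ T) : IsRelWord T p.2 :=
  ⟨p, hp, Or.inr rfl⟩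

theorem IsRelWord.mono {T' : Set (FreeMonoid X × FreeMonoid X)} (h : T ⊆ T') {w : FreeMonoid X}
    (hw : IsRelWord T w) : IsRelWord T' w :=
  let ⟨p, hp, hside⟩ := hw; ⟨p, h hp, hside⟩

theorem IsRelWord.exists_presCon_ne (hT : ∀ p ∈ T, p.1 ≠ p.2) {w : FreeMonoid X}
    (hw : IsRelWord T w) : ∃ w', IsRelWord T w' ∧ w ≠ w' ∧ presCon T w w' := by
  obtain ⟨p, hp, rfl | rfl⟩ := hw
  · exact ⟨p.2, isRelWord_snd hp, hT p hp, presCon_of_mem hp⟩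
  · exact ⟨p.1, isRelWord_fst hp, (hT p hp).symm, (presCon T).symm (presCon_of_mem hp)⟩

theorem exists_isRelWord_isFactor_of_presCon {u v : FreeMonoid X} (h : presCon T u v)
    (hne : u ≠ v) : ∃ w, IsRelWord T w ∧ IsFactor w u := by
  let Contains (x : FreeMonoid X) := ∃ w, IsRelWord T w ∧ IsFactor w x
  suffices ∀ x y, ConGen.Rel (fun x y => (x, y) ∈ T) x y → x = y ∨ Contains x ∧ Contains y
    from ((this u v h).resolve_left hne).1
  intro x y hxy
  induction hxy with
  | of x y hxy => exact .inr ⟨⟨x, isRelWord_fst hxy, isFactor_refl x⟩,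
      ⟨y, isRelWord_snd hxy, isFactor_refl y⟩⟩
  | refl x => exact .inl rfl
  | symm _ ih => exact ih.imp Eq.symm And.symm
  | trans _ _ ih₁ ih₂ =>
    rcases ih₁ with rfl | ⟨hx, hy⟩
    · exact ih₂
    · exact .inr ⟨hx, ih₂.elim (· ▸ hy) And.right⟩
  | mul _ _ ih₁ ih₂ =>
    rcases ih₁ with rfl | ⟨⟨w, hw, hwx⟩, ⟨w', hw', hwy⟩⟩
    · rcases ih₂ with rfl | ⟨⟨w, hw, hwx⟩, ⟨w', hw', hwy⟩⟩
      · exact .inl rfl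
      · exact .inr ⟨⟨w, hw, hwx.mul_left _⟩, ⟨w', hw', hwy.mul_left _⟩⟩
    · exact .inr ⟨⟨w, hw, hwx.mul_right _⟩, ⟨w', hw', hwy.mul_right _⟩⟩

theorem eq_of_presCon_of_length_lt {u v : FreeMonoid X}
    (hu : ∀ w, IsRelWord T w → u.length < w.length) (h : presCon T u v) : u = v := by
  by_contra hne
  obtain ⟨w, hw, hwu⟩ := exists_isRelWord_isFactor_of_presCon h hne
  exact (hu w hw).not_ge hwu.length_le

theorem isUnit_mk'_iff (hT : ¬ IsRelWord T 1) {u : FreeMonoid X} :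
    IsUnit ((presCon T).mk' u) ↔ u = 1 := by
  refine ⟨fun h => ?_, fun h => h ▸ (map_one (presCon T).mk').symm ▸ isUnit_one⟩
  obtain ⟨v, hv, -⟩ := isUnit_iff_exists.mp h
  obtain ⟨v, rfl⟩ := (presCon T).mk'_surjective v
  rw [← map_mul, ← map_one (presCon T).mk'] at hv
  have hlen : ∀ w, IsRelWord T w → (1 : FreeMonoid X).length < w.length := fun w hw =>
    Nat.pos_of_ne_zero fun h0 => hT (length_eq_zero.mp h0 ▸ hw)
  exact eq_one_of_mul_right' (eq_of_presCon_of_length_lt hlen ((Con.eq _).mp hv).symm).symm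

theorem irreducible_mk'_of (hT : ∀ w, IsRelWord T w → 2 ≤ w.length) (a : X) :
    Irreducible ((presCon T).mk' (of a)) := by
  have hT1 : ¬ IsRelWord T 1 := fun h => by simpa using hT 1 h
  refine ⟨fun h => of_ne_one a ((isUnit_mk'_iff hT1).mp h), fun x y hxy => ?_⟩
  obtain ⟨s, rfl⟩ := (presCon T).mk'_surjective x
  obtain ⟨t, rfl⟩ := (presCon T).mk'_surjective y
  rw [← map_mul] at hxy
  have hst : of a = s * t := eq_of_presCon_of_length_lt (fun w hw => hT w hw) ((Con.eq _).mp hxy)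
  have hlen : s.length + t.length = 1 := by rw [← length_mul, ← hst, length_of]
  rw [isUnit_mk'_iff hT1, isUnit_mk'_iff hT1, ← length_eq_zero, ← length_eq_zero]
  omega

theorem length_eq_one_of_irreducible (hT : ¬ IsRelWord T 1) {u : FreeMonoid X}
    (h : Irreducible ((presCon T).mk' u)) : u.length = 1 := by
  induction u using FreeMonoid.inductionOn' with
  | one => exact absurd (map_one (presCon T).mk') h.ne_one
  | of_mul c t _ =>
    rcases h.isUnit_or_isUnit (map_mul _ (of c) t) with hc | ht
    · exact absurd ((isUnit_mk'_iff hT).mp hc) (of_ne_one c)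
    · rw [(isUnit_mk'_iff hT).mp ht, mul_one, length_of]

end Presentation

section SmallOverlap

variable {X Y : Type*} {T : Set (FreeMonoid X × FreeMonoid X)} {m : ℕ}

theorem SmallOverlapC.mono {n : ℕ} (h : SmallOverlapC T m) (hnm : n ≤ m) : SmallOverlapC T n :=
  fun w hw l hl hprod => hnm.trans (h w hw l hl hprod)

theorem SmallOverlapC.not_isRelWord_one (h : SmallOverlapC T m) (hm : 1 ≤ m) :
    ¬ IsRelWord T 1 := fun h1 => by
  simpa using hm.trans (h 1 h1 [] (by simp) rfl)

theorem SmallOverlapC.length_pos (h : SmallOverlapC T m) (hm : 1 ≤ m) {w : FreeMonoid X}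
    (hw : IsRelWord T w) : 0 < w.length :=
  Nat.pos_of_ne_zero fun h0 => h.not_isRelWord_one hm (length_eq_zero.mp h0 ▸ hw)

theorem SmallOverlapC.eq_of_isFactor (h : SmallOverlapC T 2) {w w' : FreeMonoid X}
    (hw : IsRelWord T w) (hw' : IsRelWord T w') (hww' : IsFactor w w') : w = w' := by
  by_contra hne
  have hpiece : IsPiece T w := .inr (.inl ⟨w, w', hw, hw', hne, isFactor_refl w, hww'⟩)
  simpa using h w hw [w] (by simpa using hpiece) (by simp)

theorem IsPiece.map {T' : Set (FreeMonoid Y × FreeMonoid Y)} {f : FreeMonoid X →* FreeMonoid Y}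
    (hf : Function.Injective f) (hrel : ∀ w, IsRelWord T w → IsRelWord T' (f w))
    {u : FreeMonoid X} (hu : IsPiece T u) : IsPiece T' (f u) := by
  rcases hu with rfl | ⟨w₁, w₂, hw₁, hw₂, hne, hu₁, hu₂⟩ | ⟨w, hw, p, q, p', q', rfl, he, hne⟩
  · exact .inl (map_one f)
  · exact .inr (.inl ⟨f w₁, f w₂, hrel w₁ hw₁, hrel w₂ hw₂, hf.ne hne, hu₁.map f, hu₂.map f⟩)
  · refine .inr (.inr ⟨_, hrel _ hw, f p, f q, f p', f q', ?_, ?_, hf.ne hne⟩)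
    · rw [map_mul, map_mul]
    · rw [he, map_mul, map_mul]

theorem SmallOverlapC.of_map {T' : Set (FreeMonoid Y × FreeMonoid Y)}
    {f : FreeMonoid X →* FreeMonoid Y} (hf : Function.Injective f)
    (hrel : ∀ w, IsRelWord T w → IsRelWord T' (f w)) (h : SmallOverlapC T' m) :
    SmallOverlapC T m := by
  intro w hw l hl hprod
  simpa using h (f w) (hrel w hw) (l.map f)
    (by simpa using fun u hu => (hl u hu).map hf hrel) (by rw [← map_list_prod, hprod])

theorem NoRepeatedRelWords.eq_of_fst_eq (h : NoRepeatedRelWords T)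
    {p q : FreeMonoid X × FreeMonoid X} (hp : p ∈ T) (hq : q ∈ T) (hpq : p.1 = q.1) : p = q :=
  by_contra fun hne => (h.2 p hp q hq hne).1 hpq

theorem NoRepeatedRelWords.eq_of_snd_eq (h : NoRepeatedRelWords T)
    {p q : FreeMonoid X × FreeMonoid X} (hp : p ∈ T) (hq : q ∈ T) (hpq : p.2 = q.2) : p = q :=
  by_contra fun hne => (h.2 p hp q hq hne).2.2.2 hpq

theorem NoRepeatedRelWords.fst_ne_snd (h : NoRepeatedRelWords T)
    {p q : FreeMonoid X × FreeMonoid X} (hp : p ∈ T) (hq : q ∈ T) : p.1 ≠ q.2 := by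
  by_cases hpq : p = q
  · exact hpq ▸ h.1 p hp
  · exact (h.2 p hp q hq hpq).2.1

end SmallOverlap

theorem mk'_mem_closure_of_forall_ne {A : Type*} {R : Set (FreeMonoid A × FreeMonoid A)} {a : A}
    {w : FreeMonoid A} (hw : ∀ b ∈ w, b ≠ a) :
    (presCon R).mk' w ∈
      Submonoid.closure {x | ∃ b : A, b ≠ a ∧ x = (presCon R).mk' (of b)} := by
  induction w using FreeMonoid.inductionOn' with
  | one => exact map_one (presCon R).mk' ▸ one_mem _
  | of_mul c t ih =>
    rw [map_mul]
    exact mul_mem (Submonoid.subset_closure ⟨c, hw c (mem_mul.mpr (.inl mem_of_self)), rfl⟩)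
      (ih fun b hb => hw b (mem_mul.mpr (.inr hb)))

theorem GeneratorMinimal.two_le_length {A : Type*} {R : Set (FreeMonoid A × FreeMonoid A)}
    (hmin : GeneratorMinimal R) (hR : StronglyC R 2) {w : FreeMonoid A} (hw : IsRelWord R w) :
    2 ≤ w.length := by
  by_contra! hlen
  interval_cases hl : w.length
  · exact hR.1.not_isRelWord_one one_le_two (length_eq_zero.mp hl ▸ hw)
  obtain ⟨a, rfl⟩ := length_eq_one.mp hl
  obtain ⟨w', hw', hne, hcon⟩ := hw.exists_presCon_ne hR.2.1
  have hw'a : ∀ b ∈ w', b ≠ a := fun b hb hba =>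
    hne (hR.1.eq_of_isFactor hw hw' (isFactor_of_mem (hba ▸ hb)))
  have hclass : (presCon R).mk' (of a) = (presCon R).mk' w' := (Con.eq _).mpr hcon
  exact hmin a (by rw [IsRedundant, hclass]; exact mk'_mem_closure_of_forall_ne hw'a)

section RedundantLetters

variable {B : Type*} {S : Set (FreeMonoid B × FreeMonoid B)}

-- A relation `(of b, of c)` between two letters makes only `b` redundant, so that `c` survives
-- to represent their class.
def redundantLetters (S : Set (FreeMonoid B × FreeMonoid B)) : Set B :=
  {b | (∃ w, (of b, w) ∈ S) ∨ ∃ w, (w, of b) ∈ S ∧ 2 ≤ w.length}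

open scoped Classical in
noncomputable def replaceLetter (S : Set (FreeMonoid B × FreeMonoid B)) (b : B) : FreeMonoid B :=
  if h : ∃ w, (of b, w) ∈ S then h.choose
  else if h' : ∃ w, (w, of b) ∈ S ∧ 2 ≤ w.length then h'.choose
  else of b

noncomputable def replaceRedundant (S : Set (FreeMonoid B × FreeMonoid B)) :
    FreeMonoid B →* FreeMonoid B :=
  FreeMonoid.lift (replaceLetter S)

def longRelations (S : Set (FreeMonoid B × FreeMonoid B)) : Set (FreeMonoid B × FreeMonoid B) :=
  {p ∈ S | 2 ≤ p.1.length ∧ 2 ≤ p.2.length}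

theorem longRelations_subset : longRelations S ⊆ S := fun _ hp => hp.1

theorem IsRelWord.two_le_length_of_longRelations {w : FreeMonoid B}
    (hw : IsRelWord (longRelations S) w) : 2 ≤ w.length := by
  obtain ⟨p, hp, rfl | rfl⟩ := hw
  exacts [hp.2.1, hp.2.2]

theorem isRelWord_of_mem_redundantLetters {b : B} (hb : b ∈ redundantLetters S) :
    IsRelWord S (of b) := by
  rcases hb with ⟨w, hw⟩ | ⟨w, hw, -⟩
  exacts [isRelWord_fst hw, isRelWord_snd hw]

theorem notMem_redundantLetters_of_mem_of_two_le_length (hS : SmallOverlapC S 2)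
    {w : FreeMonoid B} (hw : IsRelWord S w) (hlen : 2 ≤ w.length) {c : B} (hc : c ∈ w) :
    c ∉ redundantLetters S := fun hcD => by
  have := hS.eq_of_isFactor (isRelWord_of_mem_redundantLetters hcD) hw (isFactor_of_mem hc)
  rw [← this, length_of] at hlen
  omega

theorem notMem_redundantLetters_of_mem (hS : NoRepeatedRelWords S) {b c : B}
    (h : (of b, of c) ∈ S) : c ∉ redundantLetters S := by
  rintro (⟨w, hw⟩ | ⟨w, hw, hlen⟩)
  · exact hS.fst_ne_snd hw h rfl
  · have : w = of b := congrArg Prod.fst (hS.eq_of_snd_eq hw h rfl)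
    rw [this, length_of] at hlen
    omega

theorem replaceLetter_of_notMem {b : B} (hb : b ∉ redundantLetters S) :
    replaceLetter S b = of b := by
  rw [replaceLetter, dif_neg fun h => hb (.inl h), dif_neg fun h => hb (.inr h)]

theorem replaceLetter_of_fst_mem (hS : NoRepeatedRelWords S) {b : B} {w : FreeMonoid B}
    (hw : (of b, w) ∈ S) : replaceLetter S b = w := by
  have hex : ∃ w, (of b, w) ∈ S := ⟨w, hw⟩
  rw [replaceLetter, dif_pos hex]
  exact congrArg Prod.snd (hS.eq_of_fst_eq hex.choose_spec hw rfl)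

theorem replaceLetter_of_snd_mem (hS : NoRepeatedRelWords S) {b : B} {w : FreeMonoid B}
    (hw : (w, of b) ∈ S) (hlen : 2 ≤ w.length) : replaceLetter S b = w := by
  have hex : ∃ w, (w, of b) ∈ S ∧ 2 ≤ w.length := ⟨w, hw, hlen⟩
  rw [replaceLetter, dif_neg fun ⟨w', hw'⟩ => hS.fst_ne_snd hw' hw rfl, dif_pos hex]
  exact congrArg Prod.fst (hS.eq_of_snd_eq hex.choose_spec.1 hw rfl)

theorem presCon_replaceLetter (b : B) : presCon S (replaceLetter S b) (of b) := by
  rw [replaceLetter]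
  split_ifs with h h'
  · exact (presCon S).symm (presCon_of_mem h.choose_spec)
  · exact presCon_of_mem h'.choose_spec.1
  · exact (presCon S).refl _

theorem notMem_redundantLetters_of_mem_replaceLetter (hS : StronglyC S 2) {b c : B}
    (hc : c ∈ replaceLetter S b) : c ∉ redundantLetters S := by
  by_cases hb : b ∈ redundantLetters S
  · rcases hb with ⟨w, hw⟩ | ⟨w, hw, hlen⟩
    · rw [replaceLetter_of_fst_mem hS.2 hw] at hc
      rcases Nat.lt_or_ge w.length 2 with hlt | hlen
      · have hw1 : w.length = 1 := by
          have : 0 < w.length := hS.1.length_pos one_le_two (isRelWord_snd hw)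
          omega
        obtain ⟨c', rfl⟩ := length_eq_one.mp hw1
        exact mem_of.mp hc ▸ notMem_redundantLetters_of_mem hS.2 hw
      · exact notMem_redundantLetters_of_mem_of_two_le_length hS.1 (isRelWord_snd hw) hlen hc
    · rw [replaceLetter_of_snd_mem hS.2 hw hlen] at hc
      exact notMem_redundantLetters_of_mem_of_two_le_length hS.1 (isRelWord_fst hw) hlen hc
  · rw [replaceLetter_of_notMem hb, mem_of] at hc
    exact hc ▸ hb

end RedundantLetters

section ReplaceRedundant

variable {B : Type*} {S : Set (FreeMonoid B × FreeMonoid B)}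

theorem replaceRedundant_of (b : B) : replaceRedundant S (of b) = replaceLetter S b :=
  lift_eval_of _ _

theorem notMem_redundantLetters_of_mem_replaceRedundant (hS : StronglyC S 2) {u : FreeMonoid B}
    {c : B} (hc : c ∈ replaceRedundant S u) : c ∉ redundantLetters S := by
  induction u using FreeMonoid.inductionOn' with
  | one => exact absurd (map_one (replaceRedundant S) ▸ hc) notMem_one
  | of_mul b t ih =>
    rw [map_mul, mem_mul, replaceRedundant_of] at hc
    exact hc.elim (notMem_redundantLetters_of_mem_replaceLetter hS) ih

theorem replaceRedundant_of_forall_notMem {u : FreeMonoid B}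
    (hu : ∀ c ∈ u, c ∉ redundantLetters S) : replaceRedundant S u = u := by
  induction u using FreeMonoid.inductionOn' with
  | one => exact map_one _
  | of_mul b t ih =>
    have hb := hu b (mem_mul.mpr (.inl mem_of_self))
    rw [map_mul, replaceRedundant_of, replaceLetter_of_notMem hb,
      ih fun c hc => hu c (mem_mul.mpr (.inr hc))]

theorem replaceRedundant_of_two_le_length (hS : SmallOverlapC S 2) {w : FreeMonoid B}
    (hw : IsRelWord S w) (hlen : 2 ≤ w.length) : replaceRedundant S w = w :=
  replaceRedundant_of_forall_notMem fun _ =>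
    notMem_redundantLetters_of_mem_of_two_le_length hS hw hlen

theorem mk'_replaceRedundant (u : FreeMonoid B) :
    (presCon S).mk' (replaceRedundant S u) = (presCon S).mk' u := by
  change ((presCon S).mk'.comp (replaceRedundant S)) u = (presCon S).mk' u
  congr 1
  exact FreeMonoid.hom_eq fun b => (Con.eq _).mpr (presCon_replaceLetter b)

theorem replaceRedundant_mem_longRelations_or_eq (hS : StronglyC S 2) {x y : FreeMonoid B}
    (hxy : (x, y) ∈ S) :
    (replaceRedundant S x, replaceRedundant S y) ∈ longRelations S ∨
      replaceRedundant S x = replaceRedundant S y := by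
  have hx : 0 < x.length := hS.1.length_pos one_le_two (isRelWord_fst hxy)
  have hy : 0 < y.length := hS.1.length_pos one_le_two (isRelWord_snd hxy)
  rcases Nat.lt_or_ge x.length 2 with hx2 | hx2
  · obtain ⟨b, rfl⟩ := length_eq_one.mp (by omega : x.length = 1)
    right
    rw [replaceRedundant_of, replaceLetter_of_fst_mem hS.2 hxy]
    rcases Nat.lt_or_ge y.length 2 with hy2 | hy2
    · obtain ⟨c, rfl⟩ := length_eq_one.mp (by omega : y.length = 1)
      rw [replaceRedundant_of, replaceLetter_of_notMem (notMem_redundantLetters_of_mem hS.2 hxy)]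
    · exact (replaceRedundant_of_two_le_length hS.1 (isRelWord_snd hxy) hy2).symm
  · rw [replaceRedundant_of_two_le_length hS.1 (isRelWord_fst hxy) hx2]
    rcases Nat.lt_or_ge y.length 2 with hy2 | hy2
    · obtain ⟨c, rfl⟩ := length_eq_one.mp (by omega : y.length = 1)
      exact .inr (by rw [replaceRedundant_of, replaceLetter_of_snd_mem hS.2 hxy hx2])
    · rw [replaceRedundant_of_two_le_length hS.1 (isRelWord_snd hxy) hy2]
      exact .inl ⟨hxy, hx2, hy2⟩

theorem presCon_longRelations_iff (hS : StronglyC S 2) {x y : FreeMonoid B}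
    (hx : ∀ c ∈ x, c ∉ redundantLetters S) (hy : ∀ c ∈ y, c ∉ redundantLetters S) :
    presCon (longRelations S) x y ↔ presCon S x y := by
  refine ⟨fun h => presCon_mono longRelations_subset h, fun h => ?_⟩
  have hle : presCon S ≤
      Con.comap (replaceRedundant S) (map_mul _) (presCon (longRelations S)) :=
    presCon_le_iff.mpr fun p hp => (replaceRedundant_mem_longRelations_or_eq hS hp).elim
      presCon_of_mem fun heq => Con.comap_rel _ |>.mpr (heq ▸ (presCon _).refl _)
  simpa only [Con.comap_rel, replaceRedundant_of_forall_notMem hx,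
    replaceRedundant_of_forall_notMem hy] using hle h

end ReplaceRedundant

theorem presCon_preimage_iff {A B : Type*} {σ : A → B} {T : Set (FreeMonoid B × FreeMonoid B)}
    (hσ : Function.Injective σ) (hT : ∀ w, IsRelWord T w → ∀ c ∈ w, c ∈ Set.range σ)
    {u v : FreeMonoid A} :
    presCon (Prod.map (map σ) (map σ) ⁻¹' T) u v ↔ presCon T (map σ u) (map σ v) := by
  let ρ : FreeMonoid B →* FreeMonoid A := FreeMonoid.lift (Function.extend σ of 1)
  have hρ : ∀ u, ρ (map σ u) = u := DFunLike.congr_fun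
    (show ρ.comp (map σ) = MonoidHom.id _ from
      FreeMonoid.hom_eq fun a => by simp [ρ, hσ.extend_apply])
  have hmap_ρ : ∀ x : FreeMonoid B, (∀ c ∈ x, c ∈ Set.range σ) → map σ (ρ x) = x := by
    intro x hx
    induction x using FreeMonoid.inductionOn' with
    | one => simp
    | of_mul b t ih =>
      obtain ⟨a, rfl⟩ := hx b (mem_mul.mpr (.inl mem_of_self))
      rw [map_mul, map_mul, ← map_of σ a, hρ, ih fun c hc => hx c (mem_mul.mpr (.inr hc))]
  constructor
  · intro h
    have hle : presCon (Prod.map (map σ) (map σ) ⁻¹' T) ≤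
        Con.comap (map σ) (map_mul _) (presCon T) :=
      presCon_le_iff.mpr fun p hp => presCon_of_mem hp
    exact hle h
  · intro h
    have hle : presCon T ≤
        Con.comap ρ (map_mul _) (presCon (Prod.map (map σ) (map σ) ⁻¹' T)) :=
      presCon_le_iff.mpr fun p hp => presCon_of_mem (by
        show (map σ (ρ p.1), map σ (ρ p.2)) ∈ T
        rwa [hmap_ρ _ (hT _ (isRelWord_fst hp)), hmap_ρ _ (hT _ (isRelWord_snd hp))])
    simpa only [Con.comap_rel, hρ] using hle h

section LetterMap

variable {A B : Type*} {R : Set (FreeMonoid A × FreeMonoid A)}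
  {S : Set (FreeMonoid B × FreeMonoid B)}

theorem exists_notMem_redundantLetters_mk'_eq (hS : StronglyC S 2) {x : (presCon S).Quotient}
    (hx : Irreducible x) : ∃ b ∉ redundantLetters S, (presCon S).mk' (of b) = x := by
  obtain ⟨u, rfl⟩ := (presCon S).mk'_surjective x
  rw [← mk'_replaceRedundant] at hx ⊢
  obtain ⟨b, hb⟩ := length_eq_one.mp
    (length_eq_one_of_irreducible (hS.1.not_isRelWord_one one_le_two) hx)
  rw [hb]
  exact ⟨b, notMem_redundantLetters_of_mem_replaceRedundant hS (hb ▸ mem_of_self), rfl⟩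

theorem exists_letterMap (hR : ∀ w, IsRelWord R w → 2 ≤ w.length) (hS : StronglyC S 2)
    (e : (presCon R).Quotient ≃* (presCon S).Quotient) :
    ∃ σ : A → B, (∀ a, σ a ∉ redundantLetters S) ∧
      ∀ u, (presCon S).mk' (map σ u) = e ((presCon R).mk' u) := by
  choose σ hσD hσ using fun a =>
    exists_notMem_redundantLetters_mk'_eq hS ((irreducible_mk'_of hR a).map e)
  exact ⟨σ, hσD, DFunLike.congr_fun (FreeMonoid.hom_eq (f := (presCon S).mk'.comp (map σ))
    (g := e.toMonoidHom.comp (presCon R).mk') hσ)⟩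

theorem notMem_redundantLetters_of_mem_map {σ : A → B}
    (hσD : ∀ a, σ a ∉ redundantLetters S) {u : FreeMonoid A} {c : B} (hc : c ∈ map σ u) :
    c ∉ redundantLetters S := by
  obtain ⟨a, -, rfl⟩ := mem_map.mp hc
  exact hσD a

theorem presCon_iff_presCon_longRelations_map (hS : StronglyC S 2)
    {e : (presCon R).Quotient ≃* (presCon S).Quotient} {σ : A → B}
    (hσD : ∀ a, σ a ∉ redundantLetters S)
    (hσe : ∀ u, (presCon S).mk' (map σ u) = e ((presCon R).mk' u)) {u v : FreeMonoid A} :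
    presCon R u v ↔ presCon (longRelations S) (map σ u) (map σ v) := by
  rw [presCon_longRelations_iff hS (fun _ => notMem_redundantLetters_of_mem_map hσD)
    (fun _ => notMem_redundantLetters_of_mem_map hσD), ← Con.eq, ← Con.eq]
  change (presCon R).mk' u = (presCon R).mk' v ↔ (presCon S).mk' _ = (presCon S).mk' _
  rw [hσe, hσe]
  exact e.injective.eq_iff.symm

theorem injective_of_presCon_iff {T : Set (FreeMonoid B × FreeMonoid B)} {σ : A → B}
    (hR : ∀ w, IsRelWord R w → 2 ≤ w.length)
    (hσ : ∀ u v, presCon R u v ↔ presCon T (map σ u) (map σ v)) : Function.Injective σ :=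
  fun a a' h => of_injective <| eq_of_presCon_of_length_lt (fun w hw => hR w hw)
    ((hσ _ _).mpr (by rw [map_of, map_of, h]; exact (presCon T).refl _))

theorem mem_range_of_notMem_redundantLetters (hS : StronglyC S 2)
    {e : (presCon R).Quotient ≃* (presCon S).Quotient} {σ : A → B}
    (hσD : ∀ a, σ a ∉ redundantLetters S)
    (hσe : ∀ u, (presCon S).mk' (map σ u) = e ((presCon R).mk' u)) {b : B}
    (hb : b ∉ redundantLetters S) : b ∈ Set.range σ := by
  obtain ⟨s, hs⟩ := (presCon R).mk'_surjective (e.symm ((presCon S).mk' (of b)))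
  have hcon : presCon (longRelations S) (of b) (map σ s) := by
    rw [presCon_longRelations_iff hS (fun c hc => mem_of.mp hc ▸ hb)
      (fun _ => notMem_redundantLetters_of_mem_map hσD)]
    exact (Con.eq _).mp (show (presCon S).mk' (of b) = (presCon S).mk' (map σ s) by
      rw [hσe, hs, e.apply_symm_apply])
  have hbs : of b = map σ s := eq_of_presCon_of_length_lt
    (fun w hw => hw.two_le_length_of_longRelations) hcon
  obtain ⟨a, rfl⟩ := length_eq_one.mp (by
    simpa [length, toList_map] using (congrArg length hbs).symm : s.length = 1)
  exact ⟨a, of_injective (hbs.trans (map_of σ a)).symm⟩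

end LetterMap

theorem isRelWord_of_presCon_eq {X : Type*} {T T' : Set (FreeMonoid X × FreeMonoid X)}
    (hT : StronglyC T 2) (hT' : ∀ p ∈ T', p.1 ≠ p.2) (h : presCon T = presCon T')
    {w : FreeMonoid X} (hw : IsRelWord T w) : IsRelWord T' w := by
  obtain ⟨w', -, hne, hww'⟩ := hw.exists_presCon_ne hT.2.1
  obtain ⟨z, hz, hzw⟩ := exists_isRelWord_isFactor_of_presCon (h ▸ hww') hne
  obtain ⟨z', -, hne', hzz'⟩ := hz.exists_presCon_ne hT'
  obtain ⟨w₁, hw₁, hw₁z⟩ :=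
    exists_isRelWord_isFactor_of_presCon (h ▸ hzz' : presCon T z z') hne'
  have hw₁w : w₁ = w := hT.1.eq_of_isFactor hw₁ hw (hw₁z.trans hzw)
  rwa [hzw.eq_of_length_le (hw₁w ▸ hw₁z.length_le)] at hz

theorem statement10_general {A : Type u} (R : Set (FreeMonoid A × FreeMonoid A)) (m : ℕ)
    (hmin : GeneratorMinimal R) (hC2 : StronglyC R 2)
    (h : ∃ (B : Type v) (S : Set (FreeMonoid B × FreeMonoid B)),
      StronglyC S m ∧ Nonempty ((presCon R).Quotient ≃* (presCon S).Quotient)) :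
    StronglyC R m := by
  refine ⟨?_, hC2.2⟩
  rcases le_or_gt m 2 with hm | hm
  · exact hC2.1.mono hm
  obtain ⟨B, S, hS, ⟨e⟩⟩ := h
  have hS2 : StronglyC S 2 := ⟨hS.1.mono hm.le, hS.2⟩
  have hRlen : ∀ w, IsRelWord R w → 2 ≤ w.length := fun _ => hmin.two_le_length hC2
  obtain ⟨σ, hσD, hσe⟩ := exists_letterMap hRlen hS2 e
  have hRS := fun u v => presCon_iff_presCon_longRelations_map (u := u) (v := v) hS2 hσD hσe
  have hσ : Function.Injective σ := injective_of_presCon_iff hRlen hRS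
  have hrange : ∀ w, IsRelWord (longRelations S) w → ∀ c ∈ w, c ∈ Set.range σ :=
    fun w hw c hc => mem_range_of_notMem_redundantLetters hS2 hσD hσe
      (notMem_redundantLetters_of_mem_of_two_le_length hS2.1 (hw.mono longRelations_subset)
        hw.two_le_length_of_longRelations hc)
  set R' := Prod.map (map σ) (map σ) ⁻¹' longRelations S
  have hRR' : presCon R = presCon R' :=
    Con.ext fun u v => (hRS u v).trans (presCon_preimage_iff hσ hrange).symm
  have hR' : SmallOverlapC R' m := hS.1.of_map (FreeMonoid.map_injective hσ) fun _ ⟨p, hp, hw⟩ =>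
    ⟨_, longRelations_subset hp, hw.imp (congrArg _) (congrArg _)⟩
  have hR'ne : ∀ p ∈ R', p.1 ≠ p.2 := fun p hp hp12 => hS.2.1 _ hp.1 (congrArg (map σ) hp12)
  exact hR'.of_map (f := MonoidHom.id _) Function.injective_id fun _ =>
    isRelWord_of_presCon_eq hC2 hR'ne hRR'

/-- **Corollary.** A generator-minimal strongly C(2) presentation for a monoid which
admits a strongly C(m) presentation is itself strongly C(m). -/
theorem statement10 {A : Type u} (R : Set (FreeMonoid A × FreeMonoid A)) (m : ℕ)
    (hm : 1 ≤ m) (hmin : GeneratorMinimal R) (hC2 : StronglyC R 2)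
    (h : ∃ (B : Type v) (S : Set (FreeMonoid B × FreeMonoid B)),
      StronglyC S m ∧ Nonempty ((presCon R).Quotient ≃* (presCon S).Quotient)) :
    StronglyC R m :=
  statement10_general R m hmin hC2 h
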